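/- If ρ_i: X_i → X_i (i = 1,2,3) are linear maps preserving the trilinear forms (det(ρ_i x, ρ_i y, ρ_i z) = det(x,y,z) for all x,y,z ∈ X_i), then each ρ_i is invertible and there exists a unique Lie algebra automorphism Φ of L such that Φ(x₁⊗x₂⊗x₃) = ρ₁(x₁)⊗ρ₂(x₂)⊗ρ₃(x₃) on L₁ and Φ(g) = ρ_i ∘ g ∘ ρ_i⁻¹ for every g ∈ sl(X_i) ⊆ L₀; moreover this Φ satisfies Φ(f₁⊗f₂⊗f₃) = (f₁∘ρ₁⁻¹)⊗(f₂∘ρ₂⁻¹)⊗(f₃∘ρ₃⁻¹) on L₂. -/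
import Mathlib


noncomputable section

open Matrix
open scoped BigOperators

variable (F : Type*) [Field F] [IsAlgClosed F] [CharZero F]

set_option linter.unusedSectionVars false

/-- `gl₃ = M₃(F)`, the matrix algebra of a 3-dimensional space in a fixed basis. -/
abbrev gl3 := Matrix (Fin 3) (Fin 3) F

/-- Coordinates of a tensor in `X₁ ⊗ X₂ ⊗ X₃` with respect to the fixed bases. -/
abbrev T3 := Fin 3 → Fin 3 → Fin 3 → F

/-- The ambient space `(gl₃)³ × (X₁⊗X₂⊗X₃) × (X₁*⊗X₂*⊗X₃*)` containing the model of e₆. -/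
abbrev Mbig := (gl3 F × gl3 F × gl3 F) × (T3 F × T3 F)

/-- Trace-zero matrices: the coordinate model of `sl(X_i)`. -/
def sl3 : Submodule F (gl3 F) where
  carrier := {g | Matrix.trace g = 0}
  add_mem' := by intro a b ha hb; simp_all [Matrix.trace_add]
  zero_mem' := by simp
  smul_mem' := by intro c a ha; simp_all [Matrix.trace_smul]

lemma mem_sl3 {g : gl3 F} : g ∈ sl3 F ↔ Matrix.trace g = 0 := Iff.rfl

/-- The model of `e₆`: `sl(X₁)⊕sl(X₂)⊕sl(X₃) ⊕ X₁⊗X₂⊗X₃ ⊕ X₁*⊗X₂*⊗X₃*`, as a submodule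
of the ambient space. -/
def Lsub : Submodule F (Mbig F) :=
  ((sl3 F).prod ((sl3 F).prod (sl3 F))).prod
    ((⊤ : Submodule F (T3 F)).prod (⊤ : Submodule F (T3 F)))

/-- The fixed alternating trilinear form: determinant of the matrix with rows `x, y, z`. -/
def det3 (x y z : Fin 3 → F) : F := Matrix.det (Matrix.of ![x, y, z])

/-- The Levi-Civita symbol `ε_{abc} = det(e_a, e_b, e_c)`, encoding the identification
`X∧X ≅ X*` given by `x∧y ↦ det(x,y,−)` (and dually `X*∧X* ≅ X`). -/
def eps (a b c : Fin 3) : F :=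
  det3 F (Pi.single a 1) (Pi.single b 1) (Pi.single c 1)

/-- Coordinates of `[⊗x_i, ⊗y_i] = ⊗(x_i ∧ y_i)` (and of `[⊗f_i, ⊗g_i] = ⊗(f_i ∧ g_i)`). -/
def wedgeT (x y : T3 F) : T3 F := fun c d e =>
  ∑ i, ∑ j, ∑ k, ∑ l, ∑ m, ∑ n,
    x i j k * y l m n * eps F i l c * eps F j m d * eps F k n e

/-- Coordinates of the action of `(g₁,g₂,g₃) ∈ sl(X₁)⊕sl(X₂)⊕sl(X₃)` on `X₁⊗X₂⊗X₃`. -/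
def actT (g : gl3 F × gl3 F × gl3 F) (x : T3 F) : T3 F := fun i j k =>
  (∑ a, g.1 i a * x a j k) + (∑ a, g.2.1 j a * x i a k) + (∑ a, g.2.2 k a * x i j a)

/-- Coordinates of the action of `(g₁,g₂,g₃)` on `X₁*⊗X₂*⊗X₃*` (minus the dual action). -/
def coactT (g : gl3 F × gl3 F × gl3 F) (f : T3 F) : T3 F := fun i j k =>
  -((∑ a, g.1 a i * f a j k) + (∑ a, g.2.1 a j * f i a k) + (∑ a, g.2.2 a k * f i j a))

/-- The full contraction `⟨f, x⟩ = Σ f_{ijk} x_{ijk}`. -/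
def tpair (f x : T3 F) : F := ∑ i, ∑ j, ∑ k, f i j k * x i j k

/-- The `sl(X₁)`-component of `[⊗f_i, ⊗x_i]`. -/
def pair1 (f x : T3 F) : gl3 F := Matrix.of fun r s =>
  (∑ j, ∑ k, f s j k * x r j k) - (1/3 : F) * (if r = s then tpair F f x else 0)

/-- The `sl(X₂)`-component of `[⊗f_i, ⊗x_i]`. -/
def pair2 (f x : T3 F) : gl3 F := Matrix.of fun r s =>
  (∑ i, ∑ k, f i s k * x i r k) - (1/3 : F) * (if r = s then tpair F f x else 0)

/-- The `sl(X₃)`-component of `[⊗f_i, ⊗x_i]`. -/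
def pair3 (f x : T3 F) : gl3 F := Matrix.of fun r s =>
  (∑ i, ∑ j, f i j s * x i j r) - (1/3 : F) * (if r = s then tpair F f x else 0)

/-- The bracket of the model of `e₆`, written out on the ambient coordinate space. -/
def B (u v : Mbig F) : Mbig F :=
  ( ( (u.1.1 * v.1.1 - v.1.1 * u.1.1) + pair1 F u.2.2 v.2.1 - pair1 F v.2.2 u.2.1,
      (u.1.2.1 * v.1.2.1 - v.1.2.1 * u.1.2.1) + pair2 F u.2.2 v.2.1 - pair2 F v.2.2 u.2.1,
      (u.1.2.2 * v.1.2.2 - v.1.2.2 * u.1.2.2) + pair3 F u.2.2 v.2.1 - pair3 F v.2.2 u.2.1 ),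
    ( actT F u.1 v.2.1 - actT F v.1 u.2.1 + wedgeT F u.2.2 v.2.2,
      coactT F u.1 v.2.2 - coactT F v.1 u.2.2 + wedgeT F u.2.1 v.2.1 ) )

lemma trace_pair1 (f x : T3 F) : Matrix.trace (pair1 F f x) = 0 := by
  simp only [pair1, Matrix.trace, Matrix.diag, Matrix.of_apply, if_pos, tpair,
    Finset.sum_sub_distrib, Finset.sum_const, Finset.card_univ, Fintype.card_fin,
    nsmul_eq_mul, Nat.cast_ofNat]
  ring

lemma trace_pair2 (f x : T3 F) : Matrix.trace (pair2 F f x) = 0 := by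
  simp only [pair2, Matrix.trace, Matrix.diag, Matrix.of_apply, if_pos, tpair,
    Finset.sum_sub_distrib, Finset.sum_const, Finset.card_univ, Fintype.card_fin,
    nsmul_eq_mul, Nat.cast_ofNat]
  rw [Finset.sum_comm]
  ring

lemma sum_rotate (h : Fin 3 → Fin 3 → Fin 3 → F) :
    ∑ r, ∑ i, ∑ j, h i j r = ∑ i, ∑ j, ∑ r, h i j r := by
  rw [Finset.sum_comm]
  exact Finset.sum_congr rfl fun i _ => Finset.sum_comm

lemma trace_pair3 (f x : T3 F) : Matrix.trace (pair3 F f x) = 0 := by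
  simp only [pair3, Matrix.trace, Matrix.diag, Matrix.of_apply, if_pos, tpair,
    Finset.sum_sub_distrib, Finset.sum_const, Finset.card_univ, Fintype.card_fin,
    nsmul_eq_mul, Nat.cast_ofNat]
  rw [sum_rotate F (fun i j r => f i j r * x i j r)]
  ring

/-- The bracket takes values in (the ambient copy of) `L`. -/
lemma B_mem (u v : Mbig F) : B F u v ∈ Lsub F := by
  refine ⟨⟨?_, ?_, ?_⟩, trivial, trivial⟩
  · show Matrix.trace ((u.1.1 * v.1.1 - v.1.1 * u.1.1)
        + pair1 F u.2.2 v.2.1 - pair1 F v.2.2 u.2.1) = 0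
    rw [Matrix.trace_sub, Matrix.trace_add, Matrix.trace_sub, trace_pair1, trace_pair1,
      Matrix.trace_mul_comm]
    ring
  · show Matrix.trace ((u.1.2.1 * v.1.2.1 - v.1.2.1 * u.1.2.1)
        + pair2 F u.2.2 v.2.1 - pair2 F v.2.2 u.2.1) = 0
    rw [Matrix.trace_sub, Matrix.trace_add, Matrix.trace_sub, trace_pair2, trace_pair2,
      Matrix.trace_mul_comm]
    ring
  · show Matrix.trace ((u.1.2.2 * v.1.2.2 - v.1.2.2 * u.1.2.2)
        + pair3 F u.2.2 v.2.1 - pair3 F v.2.2 u.2.1) = 0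
    rw [Matrix.trace_sub, Matrix.trace_add, Matrix.trace_sub, trace_pair3, trace_pair3,
      Matrix.trace_mul_comm]
    ring

/-- The bracket of the model of `e₆` on `L` itself. -/
def Bsub (u v : ↥(Lsub F)) : ↥(Lsub F) := ⟨B F ↑u ↑v, B_mem F ↑u ↑v⟩


/-- Coordinates of `ρ₁⊗ρ₂⊗ρ₃` acting on `X₁⊗X₂⊗X₃`. -/
def tact (R₁ R₂ R₃ : gl3 F) (x : T3 F) : T3 F := fun i j k =>
  ∑ a, ∑ b, ∑ c, R₁ i a * R₂ j b * R₃ k c * x a b c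

lemma incT1_mem (x : T3 F) : ((((0, 0, 0) : gl3 F × gl3 F × gl3 F), (x, 0)) : Mbig F) ∈ Lsub F :=
  ⟨⟨(sl3 F).zero_mem, (sl3 F).zero_mem, (sl3 F).zero_mem⟩, trivial, trivial⟩

lemma incT2_mem (f : T3 F) : ((((0, 0, 0) : gl3 F × gl3 F × gl3 F), (0, f)) : Mbig F) ∈ Lsub F :=
  ⟨⟨(sl3 F).zero_mem, (sl3 F).zero_mem, (sl3 F).zero_mem⟩, trivial, trivial⟩

lemma incSl_mem (g₁ g₂ g₃ : gl3 F) (h₁ : Matrix.trace g₁ = 0) (h₂ : Matrix.trace g₂ = 0)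
    (h₃ : Matrix.trace g₃ = 0) : ((((g₁, g₂, g₃) : gl3 F × gl3 F × gl3 F), (0, 0)) : Mbig F) ∈ Lsub F :=
  ⟨⟨h₁, h₂, h₃⟩, trivial, trivial⟩

/-- `Φ` is a Lie algebra automorphism of `L` acting as `ρ₁⊗ρ₂⊗ρ₃` on `X₁⊗X₂⊗X₃` and by
conjugation `g ↦ ρ_i g ρ_i⁻¹` on each `sl(X_i)`. -/
def ExtendsRho (R₁ R₂ R₃ : gl3 F) (Φ : ↥(Lsub F) ≃ₗ[F] ↥(Lsub F)) : Prop :=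
  (∀ u v : ↥(Lsub F), Φ (Bsub F u v) = Bsub F (Φ u) (Φ v)) ∧
  (∀ x : T3 F,
    (Φ ⟨(((0, 0, 0) : gl3 F × gl3 F × gl3 F), (x, 0)), incT1_mem F x⟩ : Mbig F) =
      (((0, 0, 0) : gl3 F × gl3 F × gl3 F), (tact F R₁ R₂ R₃ x, 0))) ∧
  (∀ g : gl3 F, ∀ h : Matrix.trace g = 0,
    (Φ ⟨(((g, 0, 0) : gl3 F × gl3 F × gl3 F), (0, 0)),
        incSl_mem F g 0 0 h (by simp) (by simp)⟩ : Mbig F) =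
      (((R₁ * g * R₁⁻¹, 0, 0) : gl3 F × gl3 F × gl3 F), (0, 0))) ∧
  (∀ g : gl3 F, ∀ h : Matrix.trace g = 0,
    (Φ ⟨(((0, g, 0) : gl3 F × gl3 F × gl3 F), (0, 0)),
        incSl_mem F 0 g 0 (by simp) h (by simp)⟩ : Mbig F) =
      (((0, R₂ * g * R₂⁻¹, 0) : gl3 F × gl3 F × gl3 F), (0, 0))) ∧
  (∀ g : gl3 F, ∀ h : Matrix.trace g = 0,
    (Φ ⟨(((0, 0, g) : gl3 F × gl3 F × gl3 F), (0, 0)),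
        incSl_mem F 0 0 g (by simp) (by simp) h⟩ : Mbig F) =
      (((0, 0, R₃ * g * R₃⁻¹) : gl3 F × gl3 F × gl3 F), (0, 0)))

-- ===== auxiliary lemmas =====
lemma f3mk0 (h : 0 < 3) : (⟨0,h⟩ : Fin 3) = 0 := rfl
lemma f3mk1 (h : 1 < 3) : (⟨1,h⟩ : Fin 3) = 1 := rfl
lemma f3mk2 (h : 2 < 3) : (⟨2,h⟩ : Fin 3) = 2 := rfl
lemma f3a01 : (0:Fin 3)+1 = 1 := rfl
lemma f3a02 : (0:Fin 3)+2 = 2 := rfl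
lemma f3a11 : (1:Fin 3)+1 = 2 := rfl
lemma f3a12 : (1:Fin 3)+2 = 0 := rfl
lemma f3a21 : (2:Fin 3)+1 = 0 := rfl
lemma f3a22 : (2:Fin 3)+2 = 1 := rfl

lemma eps_eq (a b c : Fin 3) : eps F a b c =
    ![![![0,0,0],![0,0,1],![0,-1,0]],
      ![![0,0,-1],![0,0,0],![1,0,0]],
      ![![0,1,0],![-1,0,0],![0,0,0]]] a b c := by
  fin_cases a <;> fin_cases b <;> fin_cases c <;>
    simp [eps, det3, Matrix.det_fin_three, Pi.single_apply, Matrix.vecHead, Matrix.vecTail]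

lemma det3_eq (x y z : Fin 3 → F) : det3 F x y z =
    x 0 * y 1 * z 2 - x 0 * y 2 * z 1 - x 1 * y 0 * z 2
      + x 1 * y 2 * z 0 + x 2 * y 0 * z 1 - x 2 * y 1 * z 0 := by
  simp [det3, Matrix.det_fin_three]

lemma det_of_preserving (R : gl3 F)
    (h : ∀ x y z : Fin 3 → F,
      det3 F (R.mulVec x) (R.mulVec y) (R.mulVec z) = det3 F x y z) :
    R.det = 1 := by
  have := h (Pi.single 0 1) (Pi.single 1 1) (Pi.single 2 1)
  rw [det3_eq, det3_eq] at this
  simp [Matrix.mulVec, dotProduct, Fin.sum_univ_three, Pi.single_apply] at this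
  rw [Matrix.det_fin_three]
  linear_combination this

set_option maxHeartbeats 1000000 in
lemma reorder6 (f : Fin 3 → Fin 3 → Fin 3 → Fin 3 → Fin 3 → Fin 3 → F) :
    ∑ i, ∑ j, ∑ k, ∑ l, ∑ m, ∑ n, f i j k l m n
      = ∑ k, ∑ n, ∑ j, ∑ m, ∑ i, ∑ l, f i j k l m n := by
  simp only [Fin.sum_univ_three]
  abel

lemma colA (x y : T3 F) (c d e j m k n : Fin 3) :
    ∑ i, ∑ l, x i j k * y l m n * eps F i l c * eps F j m d * eps F k n e
      = (x (c+1) j k * y (c+2) m n - x (c+2) j k * y (c+1) m n)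
          * eps F j m d * eps F k n e := by
  fin_cases c <;>
  · simp only [Fin.sum_univ_three, eps_eq, f3mk0, f3mk1, f3mk2, f3a01, f3a02, f3a11, f3a12,
      f3a21, f3a22, Matrix.cons_val_zero, Matrix.cons_val_one, Matrix.head_cons,
      Matrix.cons_val_two, Matrix.tail_cons]
    ring

lemma colB (x y : T3 F) (c d e k n : Fin 3) :
    ∑ j, ∑ m, (x (c+1) j k * y (c+2) m n - x (c+2) j k * y (c+1) m n)
        * eps F j m d * eps F k n e
      = (x (c+1) (d+1) k * y (c+2) (d+2) n - x (c+2) (d+1) k * y (c+1) (d+2) n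
         - x (c+1) (d+2) k * y (c+2) (d+1) n + x (c+2) (d+2) k * y (c+1) (d+1) n)
          * eps F k n e := by
  fin_cases d <;>
  · simp only [Fin.sum_univ_three, eps_eq, f3mk0, f3mk1, f3mk2, f3a01, f3a02, f3a11, f3a12,
      f3a21, f3a22, Matrix.cons_val_zero, Matrix.cons_val_one, Matrix.head_cons,
      Matrix.cons_val_two, Matrix.tail_cons]
    ring

lemma colC (x y : T3 F) (c d e : Fin 3) :
    ∑ k, ∑ n, (x (c+1) (d+1) k * y (c+2) (d+2) n - x (c+2) (d+1) k * y (c+1) (d+2) n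
         - x (c+1) (d+2) k * y (c+2) (d+1) n + x (c+2) (d+2) k * y (c+1) (d+1) n)
          * eps F k n e
      = x (c+1) (d+1) (e+1) * y (c+2) (d+2) (e+2) - x (c+1) (d+1) (e+2) * y (c+2) (d+2) (e+1)
      - x (c+1) (d+2) (e+1) * y (c+2) (d+1) (e+2) + x (c+1) (d+2) (e+2) * y (c+2) (d+1) (e+1)
      - x (c+2) (d+1) (e+1) * y (c+1) (d+2) (e+2) + x (c+2) (d+1) (e+2) * y (c+1) (d+2) (e+1)
      + x (c+2) (d+2) (e+1) * y (c+1) (d+1) (e+2) - x (c+2) (d+2) (e+2) * y (c+1) (d+1) (e+1) := by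
  fin_cases e <;>
  · simp only [Fin.sum_univ_three, eps_eq, f3mk0, f3mk1, f3mk2, f3a01, f3a02, f3a11, f3a12,
      f3a21, f3a22, Matrix.cons_val_zero, Matrix.cons_val_one, Matrix.head_cons,
      Matrix.cons_val_two, Matrix.tail_cons]
    ring

lemma wedgeT_closed (x y : T3 F) (c d e : Fin 3) : wedgeT F x y c d e =
      x (c+1) (d+1) (e+1) * y (c+2) (d+2) (e+2) - x (c+1) (d+1) (e+2) * y (c+2) (d+2) (e+1)
    - x (c+1) (d+2) (e+1) * y (c+2) (d+1) (e+2) + x (c+1) (d+2) (e+2) * y (c+2) (d+1) (e+1)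
    - x (c+2) (d+1) (e+1) * y (c+1) (d+2) (e+2) + x (c+2) (d+1) (e+2) * y (c+1) (d+2) (e+1)
    + x (c+2) (d+2) (e+1) * y (c+1) (d+1) (e+2) - x (c+2) (d+2) (e+2) * y (c+1) (d+1) (e+1) := by
  have h1 : wedgeT F x y c d e
      = ∑ k, ∑ n, ∑ j, ∑ m, ∑ i, ∑ l,
          x i j k * y l m n * eps F i l c * eps F j m d * eps F k n e :=
    reorder6 F _
  rw [h1]
  simp only [colA, colB]
  exact colC F x y c d e
lemma adj_entry (R : gl3 F) (w c : Fin 3) :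
    R.adjugate w c = R (c+1) (w+1) * R (c+2) (w+2) - R (c+1) (w+2) * R (c+2) (w+1) := by
  fin_cases w <;> fin_cases c <;>
    simp [Matrix.adjugate_fin_three, f3mk0, f3mk1, f3mk2, f3a01, f3a02, f3a11, f3a12,
      f3a21, f3a22] <;> ring

/-- slot-1 action -/
def s1 (R : gl3 F) (x : T3 F) : T3 F := fun i j k => ∑ a, R i a * x a j k
/-- slot-2 action -/
def s2 (R : gl3 F) (x : T3 F) : T3 F := fun i j k => ∑ a, R j a * x i a k
/-- slot-3 action -/
def s3 (R : gl3 F) (x : T3 F) : T3 F := fun i j k => ∑ a, R k a * x i j a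

lemma tact_eq (R₁ R₂ R₃ : gl3 F) (x : T3 F) :
    tact F R₁ R₂ R₃ x = s1 F R₁ (s2 F R₂ (s3 F R₃ x)) := by
  funext i j k
  simp only [tact, s1, s2, s3, Fin.sum_univ_three]
  ring

lemma s1_comp (P Q : gl3 F) (x : T3 F) : s1 F P (s1 F Q x) = s1 F (P * Q) x := by
  funext i j k
  simp only [s1, Fin.sum_univ_three, Matrix.mul_apply]
  ring
lemma s2_comp (P Q : gl3 F) (x : T3 F) : s2 F P (s2 F Q x) = s2 F (P * Q) x := by
  funext i j k
  simp only [s2, Fin.sum_univ_three, Matrix.mul_apply]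
  ring
lemma s3_comp (P Q : gl3 F) (x : T3 F) : s3 F P (s3 F Q x) = s3 F (P * Q) x := by
  funext i j k
  simp only [s3, Fin.sum_univ_three, Matrix.mul_apply]
  ring
lemma s1_s2 (P Q : gl3 F) (x : T3 F) : s1 F P (s2 F Q x) = s2 F Q (s1 F P x) := by
  funext i j k
  simp only [s1, s2, Fin.sum_univ_three]
  ring
lemma s1_s3 (P Q : gl3 F) (x : T3 F) : s1 F P (s3 F Q x) = s3 F Q (s1 F P x) := by
  funext i j k
  simp only [s1, s3, Fin.sum_univ_three]
  ring
lemma s2_s3 (P Q : gl3 F) (x : T3 F) : s2 F P (s3 F Q x) = s3 F Q (s2 F P x) := by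
  funext i j k
  simp only [s2, s3, Fin.sum_univ_three]
  ring
lemma s1_one (x : T3 F) : s1 F 1 x = x := by
  funext i j k
  simp [s1, Matrix.one_apply, Fin.sum_univ_three]
lemma s2_one (x : T3 F) : s2 F 1 x = x := by
  funext i j k
  simp [s2, Matrix.one_apply, Fin.sum_univ_three]
lemma s3_one (x : T3 F) : s3 F 1 x = x := by
  funext i j k
  simp [s3, Matrix.one_apply, Fin.sum_univ_three]

lemma wedge_s1 (R : gl3 F) (x y : T3 F) :
    wedgeT F (s1 F R x) (s1 F R y) = s1 F (R.adjugate)ᵀ (wedgeT F x y) := by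
  funext c d e
  have hr : s1 F (R.adjugate)ᵀ (wedgeT F x y) c d e
      = ∑ w, R.adjugate w c * wedgeT F x y w d e := by
    simp only [s1, Matrix.transpose_apply]
  rw [wedgeT_closed, hr]
  simp only [Fin.sum_univ_three, wedgeT_closed, adj_entry, s1, f3a01, f3a02, f3a11, f3a12,
    f3a21, f3a22]
  ring
lemma wedge_s2 (R : gl3 F) (x y : T3 F) :
    wedgeT F (s2 F R x) (s2 F R y) = s2 F (R.adjugate)ᵀ (wedgeT F x y) := by
  funext c d e
  have hr : s2 F (R.adjugate)ᵀ (wedgeT F x y) c d e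
      = ∑ w, R.adjugate w d * wedgeT F x y c w e := by
    simp only [s2, Matrix.transpose_apply]
  rw [wedgeT_closed, hr]
  simp only [Fin.sum_univ_three, wedgeT_closed, adj_entry, s2, f3a01, f3a02, f3a11, f3a12,
    f3a21, f3a22]
  ring
lemma wedge_s3 (R : gl3 F) (x y : T3 F) :
    wedgeT F (s3 F R x) (s3 F R y) = s3 F (R.adjugate)ᵀ (wedgeT F x y) := by
  funext c d e
  have hr : s3 F (R.adjugate)ᵀ (wedgeT F x y) c d e
      = ∑ w, R.adjugate w e * wedgeT F x y c d w := by
    simp only [s3, Matrix.transpose_apply]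
  rw [wedgeT_closed, hr]
  simp only [Fin.sum_univ_three, wedgeT_closed, adj_entry, s3, f3a01, f3a02, f3a11, f3a12,
    f3a21, f3a22]
  ring
lemma wedge_tact (R₁ R₂ R₃ : gl3 F) (x y : T3 F) :
    wedgeT F (tact F R₁ R₂ R₃ x) (tact F R₁ R₂ R₃ y)
      = tact F (R₁.adjugate)ᵀ (R₂.adjugate)ᵀ (R₃.adjugate)ᵀ (wedgeT F x y) := by
  rw [tact_eq, tact_eq, tact_eq, wedge_s1, wedge_s2, wedge_s3]

/-- contraction over slots 2,3 -/
def ctr23 (f x : T3 F) (a a' : Fin 3) : F := ∑ j, ∑ k, f a j k * x a' j k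

set_option maxHeartbeats 2000000 in
lemma ctr23_tact (R₂ R₃ : gl3 F) (u v : T3 F) (a a' : Fin 3) :
    ctr23 F (s2 F (R₂.adjugate)ᵀ (s3 F (R₃.adjugate)ᵀ u)) (s2 F R₂ (s3 F R₃ v)) a a'
      = R₂.det * R₃.det * ctr23 F u v a a' := by
  simp only [ctr23, s2, s3, Fin.sum_univ_three, Matrix.transpose_apply, adj_entry,
    Matrix.det_fin_three, f3a01, f3a02, f3a11, f3a12, f3a21, f3a22]
  ring

lemma ctr23_slot1 (P Q : gl3 F) (u v : T3 F) (s r : Fin 3) :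
    ctr23 F (s1 F P u) (s1 F Q v) s r = ∑ a, ∑ a', P s a * Q r a' * ctr23 F u v a a' := by
  simp only [ctr23, s1, Fin.sum_univ_three]
  ring

/-- contraction over slots 1,3 -/
def ctr13 (f x : T3 F) (a a' : Fin 3) : F := ∑ i, ∑ k, f i a k * x i a' k

set_option maxHeartbeats 2000000 in
lemma ctr13_tact (R₁ R₃ : gl3 F) (u v : T3 F) (a a' : Fin 3) :
    ctr13 F (s1 F (R₁.adjugate)ᵀ (s3 F (R₃.adjugate)ᵀ u)) (s1 F R₁ (s3 F R₃ v)) a a'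
      = R₁.det * R₃.det * ctr13 F u v a a' := by
  simp only [ctr13, s1, s3, Fin.sum_univ_three, Matrix.transpose_apply, adj_entry,
    Matrix.det_fin_three, f3a01, f3a02, f3a11, f3a12, f3a21, f3a22]
  ring

lemma ctr13_slot2 (P Q : gl3 F) (u v : T3 F) (s r : Fin 3) :
    ctr13 F (s2 F P u) (s2 F Q v) s r = ∑ a, ∑ a', P s a * Q r a' * ctr13 F u v a a' := by
  simp only [ctr13, s2, Fin.sum_univ_three]
  ring

/-- contraction over slots 1,2 -/
def ctr12 (f x : T3 F) (a a' : Fin 3) : F := ∑ i, ∑ j, f i j a * x i j a'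

set_option maxHeartbeats 2000000 in
lemma ctr12_tact (R₁ R₂ : gl3 F) (u v : T3 F) (a a' : Fin 3) :
    ctr12 F (s1 F (R₁.adjugate)ᵀ (s2 F (R₂.adjugate)ᵀ u)) (s1 F R₁ (s2 F R₂ v)) a a'
      = R₁.det * R₂.det * ctr12 F u v a a' := by
  simp only [ctr12, s1, s2, Fin.sum_univ_three, Matrix.transpose_apply, adj_entry,
    Matrix.det_fin_three, f3a01, f3a02, f3a11, f3a12, f3a21, f3a22]
  ring

lemma ctr12_slot3 (P Q : gl3 F) (u v : T3 F) (s r : Fin 3) :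
    ctr12 F (s3 F P u) (s3 F Q v) s r = ∑ a, ∑ a', P s a * Q r a' * ctr12 F u v a a' := by
  simp only [ctr12, s3, Fin.sum_univ_three]
  ring
lemma adjmul (R : gl3 F) (h : R.det = 1) : R.adjugate * R = 1 := by
  rw [Matrix.adjugate_mul, h, one_smul]
lemma muladj (R : gl3 F) (h : R.det = 1) : R * R.adjugate = 1 := by
  rw [Matrix.mul_adjugate, h, one_smul]

lemma ctr23_full (R₁ R₂ R₃ : gl3 F) (h₂ : R₂.det = 1) (h₃ : R₃.det = 1) (f x : T3 F)
    (s r : Fin 3) :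
    ctr23 F (tact F (R₁.adjugate)ᵀ (R₂.adjugate)ᵀ (R₃.adjugate)ᵀ f) (tact F R₁ R₂ R₃ x) s r
      = ∑ a, ∑ a', R₁.adjugate a s * R₁ r a' * ctr23 F f x a a' := by
  rw [tact_eq, tact_eq, ctr23_slot1]
  simp only [ctr23_tact, h₂, h₃, Matrix.transpose_apply, one_mul]

lemma tpair_eq (f x : T3 F) : tpair F f x = ∑ i, ctr23 F f x i i := rfl

lemma key2 (R : gl3 F) (h : R.det = 1) (a a' : Fin 3) :
    ∑ i, R.adjugate a i * R i a' = if a = a' then 1 else 0 := by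
  have h' := adjmul F R h
  have := congrFun (congrFun (congrArg (fun M : gl3 F => (M : gl3 F)) h') a) a'
  simpa [Matrix.mul_apply, Matrix.one_apply] using this

lemma key2' (R : gl3 F) (h : R.det = 1) (a a' : Fin 3) :
    ∑ i, R a i * R.adjugate i a' = if a = a' then 1 else 0 := by
  have h' := muladj F R h
  have := congrFun (congrFun (congrArg (fun M : gl3 F => (M : gl3 F)) h') a) a'
  simpa [Matrix.mul_apply, Matrix.one_apply] using this

lemma tpair_tact (R₁ R₂ R₃ : gl3 F) (h₁ : R₁.det = 1) (h₂ : R₂.det = 1) (h₃ : R₃.det = 1)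
    (f x : T3 F) :
    tpair F (tact F (R₁.adjugate)ᵀ (R₂.adjugate)ᵀ (R₃.adjugate)ᵀ f) (tact F R₁ R₂ R₃ x)
      = tpair F f x := by
  rw [tpair_eq]
  simp only [ctr23_full F R₁ R₂ R₃ h₂ h₃]
  have step : ∑ i, ∑ a, ∑ a', R₁.adjugate a i * R₁ i a' * ctr23 F f x a a'
      = ∑ a, ∑ a', (∑ i, R₁.adjugate a i * R₁ i a') * ctr23 F f x a a' := by
    simp only [Fin.sum_univ_three]; ring
  rw [step]
  simp only [key2 F R₁ h₁]
  rw [tpair_eq]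
  simp [Fin.sum_univ_three]

/-- the matrix `(r,s) ↦ ctr23 f x s r` -/
def mker1 (f x : T3 F) : gl3 F := Matrix.of fun r s => ctr23 F f x s r

lemma pair1_split (f x : T3 F) :
    pair1 F f x = mker1 F f x - (1/3 * tpair F f x) • (1 : gl3 F) := by
  ext r s
  by_cases h : r = s <;>
    simp only [pair1, mker1, ctr23, Matrix.of_apply, Matrix.sub_apply, Matrix.smul_apply,
      Matrix.one_apply, smul_eq_mul, mul_ite, mul_one, mul_zero, h, if_true, if_false,
      if_pos, if_neg, not_false_iff] <;>
    ring

lemma mker1_conj (R₁ R₂ R₃ : gl3 F) (h₂ : R₂.det = 1) (h₃ : R₃.det = 1) (f x : T3 F) :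
    mker1 F (tact F (R₁.adjugate)ᵀ (R₂.adjugate)ᵀ (R₃.adjugate)ᵀ f) (tact F R₁ R₂ R₃ x)
      = R₁ * mker1 F f x * R₁.adjugate := by
  ext r s
  simp only [mker1, Matrix.of_apply, ctr23_full F R₁ R₂ R₃ h₂ h₃, Matrix.mul_apply,
    Fin.sum_univ_three]
  ring

lemma pair1_conj (R₁ R₂ R₃ : gl3 F) (h₁ : R₁.det = 1) (h₂ : R₂.det = 1) (h₃ : R₃.det = 1)
    (f x : T3 F) :
    pair1 F (tact F (R₁.adjugate)ᵀ (R₂.adjugate)ᵀ (R₃.adjugate)ᵀ f) (tact F R₁ R₂ R₃ x)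
      = R₁ * pair1 F f x * R₁.adjugate := by
  rw [pair1_split, pair1_split, tpair_tact F R₁ R₂ R₃ h₁ h₂ h₃,
    mker1_conj F R₁ R₂ R₃ h₂ h₃]
  have h' : R₁ * ((1/3 * tpair F f x) • (1 : gl3 F)) * R₁.adjugate
      = (1/3 * tpair F f x) • (1 : gl3 F) := by
    rw [Matrix.mul_smul, Matrix.smul_mul, Matrix.mul_one, muladj F R₁ h₁]
  rw [mul_sub, sub_mul, h']
lemma tact_eq2 (R₁ R₂ R₃ : gl3 F) (x : T3 F) :
    tact F R₁ R₂ R₃ x = s2 F R₂ (s1 F R₁ (s3 F R₃ x)) := by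
  rw [tact_eq, s1_s2]

lemma tact_eq3 (R₁ R₂ R₃ : gl3 F) (x : T3 F) :
    tact F R₁ R₂ R₃ x = s3 F R₃ (s1 F R₁ (s2 F R₂ x)) := by
  rw [tact_eq, s2_s3, s1_s3]

lemma ctr13_full (R₁ R₂ R₃ : gl3 F) (h₁ : R₁.det = 1) (h₃ : R₃.det = 1) (f x : T3 F)
    (s r : Fin 3) :
    ctr13 F (tact F (R₁.adjugate)ᵀ (R₂.adjugate)ᵀ (R₃.adjugate)ᵀ f) (tact F R₁ R₂ R₃ x) s r
      = ∑ a, ∑ a', R₂.adjugate a s * R₂ r a' * ctr13 F f x a a' := by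
  rw [tact_eq2, tact_eq2, ctr13_slot2]
  simp only [ctr13_tact, h₁, h₃, Matrix.transpose_apply, one_mul]

lemma ctr12_full (R₁ R₂ R₃ : gl3 F) (h₁ : R₁.det = 1) (h₂ : R₂.det = 1) (f x : T3 F)
    (s r : Fin 3) :
    ctr12 F (tact F (R₁.adjugate)ᵀ (R₂.adjugate)ᵀ (R₃.adjugate)ᵀ f) (tact F R₁ R₂ R₃ x) s r
      = ∑ a, ∑ a', R₃.adjugate a s * R₃ r a' * ctr12 F f x a a' := by
  rw [tact_eq3, tact_eq3, ctr12_slot3]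
  simp only [ctr12_tact, h₁, h₂, Matrix.transpose_apply, one_mul]

def mker2 (f x : T3 F) : gl3 F := Matrix.of fun r s => ctr13 F f x s r
def mker3 (f x : T3 F) : gl3 F := Matrix.of fun r s => ctr12 F f x s r

lemma pair2_split (f x : T3 F) :
    pair2 F f x = mker2 F f x - (1/3 * tpair F f x) • (1 : gl3 F) := by
  ext r s
  by_cases h : r = s <;>
    simp only [pair2, mker2, ctr13, Matrix.of_apply, Matrix.sub_apply, Matrix.smul_apply,
      Matrix.one_apply, smul_eq_mul, mul_ite, mul_one, mul_zero, h, if_true, if_false,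
      if_pos, if_neg, not_false_iff] <;>
    try ring

lemma pair3_split (f x : T3 F) :
    pair3 F f x = mker3 F f x - (1/3 * tpair F f x) • (1 : gl3 F) := by
  ext r s
  by_cases h : r = s <;>
    simp only [pair3, mker3, ctr12, Matrix.of_apply, Matrix.sub_apply, Matrix.smul_apply,
      Matrix.one_apply, smul_eq_mul, mul_ite, mul_one, mul_zero, h, if_true, if_false,
      if_pos, if_neg, not_false_iff] <;>
    try ring

lemma mker2_conj (R₁ R₂ R₃ : gl3 F) (h₁ : R₁.det = 1) (h₃ : R₃.det = 1) (f x : T3 F) :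
    mker2 F (tact F (R₁.adjugate)ᵀ (R₂.adjugate)ᵀ (R₃.adjugate)ᵀ f) (tact F R₁ R₂ R₃ x)
      = R₂ * mker2 F f x * R₂.adjugate := by
  ext r s
  simp only [mker2, Matrix.of_apply, ctr13_full F R₁ R₂ R₃ h₁ h₃, Matrix.mul_apply,
    Fin.sum_univ_three]
  ring

lemma mker3_conj (R₁ R₂ R₃ : gl3 F) (h₁ : R₁.det = 1) (h₂ : R₂.det = 1) (f x : T3 F) :
    mker3 F (tact F (R₁.adjugate)ᵀ (R₂.adjugate)ᵀ (R₃.adjugate)ᵀ f) (tact F R₁ R₂ R₃ x)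
      = R₃ * mker3 F f x * R₃.adjugate := by
  ext r s
  simp only [mker3, Matrix.of_apply, ctr12_full F R₁ R₂ R₃ h₁ h₂, Matrix.mul_apply,
    Fin.sum_univ_three]
  ring

lemma pair2_conj (R₁ R₂ R₃ : gl3 F) (h₁ : R₁.det = 1) (h₂ : R₂.det = 1) (h₃ : R₃.det = 1)
    (f x : T3 F) :
    pair2 F (tact F (R₁.adjugate)ᵀ (R₂.adjugate)ᵀ (R₃.adjugate)ᵀ f) (tact F R₁ R₂ R₃ x)
      = R₂ * pair2 F f x * R₂.adjugate := by
  rw [pair2_split, pair2_split, tpair_tact F R₁ R₂ R₃ h₁ h₂ h₃,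
    mker2_conj F R₁ R₂ R₃ h₁ h₃]
  have h' : R₂ * ((1/3 * tpair F f x) • (1 : gl3 F)) * R₂.adjugate
      = (1/3 * tpair F f x) • (1 : gl3 F) := by
    rw [Matrix.mul_smul, Matrix.smul_mul, Matrix.mul_one, muladj F R₂ h₂]
  rw [mul_sub, sub_mul, h']

lemma pair3_conj (R₁ R₂ R₃ : gl3 F) (h₁ : R₁.det = 1) (h₂ : R₂.det = 1) (h₃ : R₃.det = 1)
    (f x : T3 F) :
    pair3 F (tact F (R₁.adjugate)ᵀ (R₂.adjugate)ᵀ (R₃.adjugate)ᵀ f) (tact F R₁ R₂ R₃ x)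
      = R₃ * pair3 F f x * R₃.adjugate := by
  rw [pair3_split, pair3_split, tpair_tact F R₁ R₂ R₃ h₁ h₂ h₃,
    mker3_conj F R₁ R₂ R₃ h₁ h₂]
  have h' : R₃ * ((1/3 * tpair F f x) • (1 : gl3 F)) * R₃.adjugate
      = (1/3 * tpair F f x) • (1 : gl3 F) := by
    rw [Matrix.mul_smul, Matrix.smul_mul, Matrix.mul_one, muladj F R₃ h₃]
  rw [mul_sub, sub_mul, h']
lemma tact_add (R₁ R₂ R₃ : gl3 F) (x y : T3 F) :
    tact F R₁ R₂ R₃ (x + y) = tact F R₁ R₂ R₃ x + tact F R₁ R₂ R₃ y := by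
  funext i j k
  simp only [tact, Pi.add_apply, Fin.sum_univ_three]
  ring

lemma tact_neg (R₁ R₂ R₃ : gl3 F) (x : T3 F) :
    tact F R₁ R₂ R₃ (-x) = -tact F R₁ R₂ R₃ x := by
  funext i j k
  simp only [tact, Pi.neg_apply, Fin.sum_univ_three]
  ring

lemma tact_sub (R₁ R₂ R₃ : gl3 F) (x y : T3 F) :
    tact F R₁ R₂ R₃ (x - y) = tact F R₁ R₂ R₃ x - tact F R₁ R₂ R₃ y := by
  funext i j k
  simp only [tact, Pi.sub_apply, Fin.sum_univ_three]
  ring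

lemma tact_smul (R₁ R₂ R₃ : gl3 F) (c : F) (x : T3 F) :
    tact F R₁ R₂ R₃ (c • x) = c • tact F R₁ R₂ R₃ x := by
  funext i j k
  simp only [tact, Pi.smul_apply, smul_eq_mul, Fin.sum_univ_three]
  ring

lemma tact_zero (R₁ R₂ R₃ : gl3 F) : tact F R₁ R₂ R₃ (0 : T3 F) = 0 := by
  funext i j k
  simp [tact]

lemma tact_s1 (R₁ R₂ R₃ P : gl3 F) (x : T3 F) :
    tact F R₁ R₂ R₃ (s1 F P x) = s1 F (R₁ * P) (s2 F R₂ (s3 F R₃ x)) := by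
  rw [tact_eq, show s2 F R₂ (s3 F R₃ (s1 F P x)) = s1 F P (s2 F R₂ (s3 F R₃ x)) by
    rw [← s1_s3, ← s1_s2], s1_comp]

lemma tact_s2 (R₁ R₂ R₃ P : gl3 F) (x : T3 F) :
    tact F R₁ R₂ R₃ (s2 F P x) = s2 F (R₂ * P) (s1 F R₁ (s3 F R₃ x)) := by
  rw [tact_eq2, show s1 F R₁ (s3 F R₃ (s2 F P x)) = s2 F P (s1 F R₁ (s3 F R₃ x)) by
    rw [← s2_s3, s1_s2], s2_comp]

lemma tact_s3 (R₁ R₂ R₃ P : gl3 F) (x : T3 F) :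
    tact F R₁ R₂ R₃ (s3 F P x) = s3 F (R₃ * P) (s1 F R₁ (s2 F R₂ x)) := by
  rw [tact_eq3, show s1 F R₁ (s2 F R₂ (s3 F P x)) = s3 F P (s1 F R₁ (s2 F R₂ x)) by
    rw [s2_s3, s1_s3], s3_comp]

lemma conj_s1 (R₁ R₂ R₃ : gl3 F) (h₁ : R₁.det = 1) (g : gl3 F) (x : T3 F) :
    s1 F (R₁ * g * R₁.adjugate) (tact F R₁ R₂ R₃ x) = tact F R₁ R₂ R₃ (s1 F g x) := by
  rw [tact_eq, s1_comp, tact_s1]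
  congr 1
  rw [mul_assoc (R₁ * g), adjmul F R₁ h₁, mul_one]

lemma conj_s2 (R₁ R₂ R₃ : gl3 F) (h₂ : R₂.det = 1) (g : gl3 F) (x : T3 F) :
    s2 F (R₂ * g * R₂.adjugate) (tact F R₁ R₂ R₃ x) = tact F R₁ R₂ R₃ (s2 F g x) := by
  rw [tact_eq2, s2_comp, tact_s2]
  congr 1
  rw [mul_assoc (R₂ * g), adjmul F R₂ h₂, mul_one]

lemma conj_s3 (R₁ R₂ R₃ : gl3 F) (h₃ : R₃.det = 1) (g : gl3 F) (x : T3 F) :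
    s3 F (R₃ * g * R₃.adjugate) (tact F R₁ R₂ R₃ x) = tact F R₁ R₂ R₃ (s3 F g x) := by
  rw [tact_eq3, s3_comp, tact_s3]
  congr 1
  rw [mul_assoc (R₃ * g), adjmul F R₃ h₃, mul_one]

lemma actT_eq (g : gl3 F × gl3 F × gl3 F) (x : T3 F) :
    actT F g x = s1 F g.1 x + s2 F g.2.1 x + s3 F g.2.2 x := rfl

lemma act_conj (R₁ R₂ R₃ : gl3 F) (h₁ : R₁.det = 1) (h₂ : R₂.det = 1) (h₃ : R₃.det = 1)
    (g : gl3 F × gl3 F × gl3 F) (x : T3 F) :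
    tact F R₁ R₂ R₃ (actT F g x)
      = actT F (R₁ * g.1 * R₁.adjugate, R₂ * g.2.1 * R₂.adjugate, R₃ * g.2.2 * R₃.adjugate)
          (tact F R₁ R₂ R₃ x) := by
  rw [actT_eq, actT_eq, tact_add, tact_add]
  simp only
  rw [conj_s1 F R₁ R₂ R₃ h₁, conj_s2 F R₁ R₂ R₃ h₂, conj_s3 F R₁ R₂ R₃ h₃]

lemma coactT_eq (g : gl3 F × gl3 F × gl3 F) (f : T3 F) :
    coactT F g f = -(s1 F g.1ᵀ f + s2 F g.2.1ᵀ f + s3 F g.2.2ᵀ f) := by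
  funext i j k
  simp only [coactT, s1, s2, s3, Pi.neg_apply, Pi.add_apply, Matrix.transpose_apply]

lemma coconj_s1 (R₁ R₂ R₃ : gl3 F) (h₁ : R₁.det = 1) (g : gl3 F) (f : T3 F) :
    s1 F (R₁ * g * R₁.adjugate)ᵀ
        (tact F (R₁.adjugate)ᵀ (R₂.adjugate)ᵀ (R₃.adjugate)ᵀ f)
      = tact F (R₁.adjugate)ᵀ (R₂.adjugate)ᵀ (R₃.adjugate)ᵀ (s1 F gᵀ f) := by
  rw [tact_eq, s1_comp, tact_s1]
  congr 1
  rw [← Matrix.transpose_mul, ← Matrix.transpose_mul]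
  congr 1
  rw [mul_assoc R₁ g (Matrix.adjugate R₁), ← mul_assoc (Matrix.adjugate R₁) R₁ (g * Matrix.adjugate R₁),
    adjmul F R₁ h₁, one_mul]

lemma coconj_s2 (R₁ R₂ R₃ : gl3 F) (h₂ : R₂.det = 1) (g : gl3 F) (f : T3 F) :
    s2 F (R₂ * g * R₂.adjugate)ᵀ
        (tact F (R₁.adjugate)ᵀ (R₂.adjugate)ᵀ (R₃.adjugate)ᵀ f)
      = tact F (R₁.adjugate)ᵀ (R₂.adjugate)ᵀ (R₃.adjugate)ᵀ (s2 F gᵀ f) := by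
  rw [tact_eq2, s2_comp, tact_s2]
  congr 1
  rw [← Matrix.transpose_mul, ← Matrix.transpose_mul]
  congr 1
  rw [mul_assoc R₂ g (Matrix.adjugate R₂), ← mul_assoc (Matrix.adjugate R₂) R₂ (g * Matrix.adjugate R₂),
    adjmul F R₂ h₂, one_mul]

lemma coconj_s3 (R₁ R₂ R₃ : gl3 F) (h₃ : R₃.det = 1) (g : gl3 F) (f : T3 F) :
    s3 F (R₃ * g * R₃.adjugate)ᵀ
        (tact F (R₁.adjugate)ᵀ (R₂.adjugate)ᵀ (R₃.adjugate)ᵀ f)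
      = tact F (R₁.adjugate)ᵀ (R₂.adjugate)ᵀ (R₃.adjugate)ᵀ (s3 F gᵀ f) := by
  rw [tact_eq3, s3_comp, tact_s3]
  congr 1
  rw [← Matrix.transpose_mul, ← Matrix.transpose_mul]
  congr 1
  rw [mul_assoc R₃ g (Matrix.adjugate R₃), ← mul_assoc (Matrix.adjugate R₃) R₃ (g * Matrix.adjugate R₃),
    adjmul F R₃ h₃, one_mul]

lemma coact_conj (R₁ R₂ R₃ : gl3 F) (h₁ : R₁.det = 1) (h₂ : R₂.det = 1) (h₃ : R₃.det = 1)
    (g : gl3 F × gl3 F × gl3 F) (f : T3 F) :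
    tact F (R₁.adjugate)ᵀ (R₂.adjugate)ᵀ (R₃.adjugate)ᵀ (coactT F g f)
      = coactT F (R₁ * g.1 * R₁.adjugate, R₂ * g.2.1 * R₂.adjugate, R₃ * g.2.2 * R₃.adjugate)
          (tact F (R₁.adjugate)ᵀ (R₂.adjugate)ᵀ (R₃.adjugate)ᵀ f) := by
  rw [coactT_eq, coactT_eq, tact_neg, tact_add, tact_add]
  simp only
  rw [coconj_s1 F R₁ R₂ R₃ h₁, coconj_s2 F R₁ R₂ R₃ h₂, coconj_s3 F R₁ R₂ R₃ h₃]

lemma tact_comp (P₁ P₂ P₃ Q₁ Q₂ Q₃ : gl3 F) (x : T3 F) :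
    tact F P₁ P₂ P₃ (tact F Q₁ Q₂ Q₃ x) = tact F (P₁*Q₁) (P₂*Q₂) (P₃*Q₃) x := by
  rw [tact_eq F Q₁ Q₂ Q₃, tact_s1,
    show s3 F P₃ (s2 F Q₂ (s3 F Q₃ x)) = s2 F Q₂ (s3 F P₃ (s3 F Q₃ x)) from
      (s2_s3 F Q₂ P₃ (s3 F Q₃ x)).symm,
    s2_comp, s3_comp, ← tact_eq]

lemma tact_one (x : T3 F) : tact F 1 1 1 x = x := by
  rw [tact_eq, s1_one, s2_one, s3_one]
lemma adjadj (R : gl3 F) (h : R.det = 1) : R.adjugate.adjugate = R := by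
  rw [Matrix.adjugate_adjugate R (by simp), h]
  simp

lemma det_adj_one (R : gl3 F) (h : R.det = 1) : (R.adjugate).det = 1 := by
  rw [Matrix.det_adjugate, h, one_pow]

lemma inv_eq_adj (R : gl3 F) (h : R.det = 1) : R⁻¹ = R.adjugate := by
  rw [Matrix.inv_def, h, Ring.inverse_one, one_smul]

lemma adjTT (R : gl3 F) (h : R.det = 1) : (((R.adjugate)ᵀ).adjugate)ᵀ = R := by
  rw [← Matrix.adjugate_transpose, Matrix.transpose_transpose, adjadj F R h]

lemma wedge_tactA (R₁ R₂ R₃ : gl3 F) (h₁ : R₁.det = 1) (h₂ : R₂.det = 1) (h₃ : R₃.det = 1)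
    (f g : T3 F) :
    wedgeT F (tact F (R₁.adjugate)ᵀ (R₂.adjugate)ᵀ (R₃.adjugate)ᵀ f)
        (tact F (R₁.adjugate)ᵀ (R₂.adjugate)ᵀ (R₃.adjugate)ᵀ g)
      = tact F R₁ R₂ R₃ (wedgeT F f g) := by
  rw [wedge_tact, adjTT F R₁ h₁, adjTT F R₂ h₂, adjTT F R₃ h₃]

lemma conjMul3 (R A a b : gl3 F) (hAR : A * R = 1) :
    R * (a * b) * A = (R * a * A) * (R * b * A) := by
  have h1 : (R * a * A) * (R * b * A) = R * (a * ((A * R) * (b * A))) := by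
    simp only [mul_assoc]
  rw [h1, hAR, one_mul]
  simp only [mul_assoc]

/-- the coordinate automorphism of the ambient space -/
def phiMap (R₁ R₂ R₃ : gl3 F) : Mbig F → Mbig F := fun u =>
  ((R₁ * u.1.1 * R₁.adjugate, R₂ * u.1.2.1 * R₂.adjugate, R₃ * u.1.2.2 * R₃.adjugate),
   (tact F R₁ R₂ R₃ u.2.1, tact F (R₁.adjugate)ᵀ (R₂.adjugate)ᵀ (R₃.adjugate)ᵀ u.2.2))

lemma main_comm (R₁ R₂ R₃ : gl3 F) (h₁ : R₁.det = 1) (h₂ : R₂.det = 1) (h₃ : R₃.det = 1)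
    (u v : Mbig F) :
    phiMap F R₁ R₂ R₃ (B F u v) = B F (phiMap F R₁ R₂ R₃ u) (phiMap F R₁ R₂ R₃ v) := by
  obtain ⟨⟨g₁, g₂, g₃⟩, x, f⟩ := u
  obtain ⟨⟨g₁', g₂', g₃'⟩, x', f'⟩ := v
  dsimp only [phiMap, B]
  refine Prod.ext (Prod.ext ?_ (Prod.ext ?_ ?_)) (Prod.ext ?_ ?_)
  · dsimp only
    rw [pair1_conj F R₁ R₂ R₃ h₁ h₂ h₃, pair1_conj F R₁ R₂ R₃ h₁ h₂ h₃,
      ← conjMul3 F R₁ _ g₁ g₁' (adjmul F R₁ h₁), ← conjMul3 F R₁ _ g₁' g₁ (adjmul F R₁ h₁),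
      mul_sub, mul_add, mul_sub, sub_mul, add_mul, sub_mul]
  · dsimp only
    rw [pair2_conj F R₁ R₂ R₃ h₁ h₂ h₃, pair2_conj F R₁ R₂ R₃ h₁ h₂ h₃,
      ← conjMul3 F R₂ _ g₂ g₂' (adjmul F R₂ h₂), ← conjMul3 F R₂ _ g₂' g₂ (adjmul F R₂ h₂),
      mul_sub, mul_add, mul_sub, sub_mul, add_mul, sub_mul]
  · dsimp only
    rw [pair3_conj F R₁ R₂ R₃ h₁ h₂ h₃, pair3_conj F R₁ R₂ R₃ h₁ h₂ h₃,
      ← conjMul3 F R₃ _ g₃ g₃' (adjmul F R₃ h₃), ← conjMul3 F R₃ _ g₃' g₃ (adjmul F R₃ h₃),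
      mul_sub, mul_add, mul_sub, sub_mul, add_mul, sub_mul]
  · dsimp only
    rw [tact_add, tact_sub, act_conj F R₁ R₂ R₃ h₁ h₂ h₃, act_conj F R₁ R₂ R₃ h₁ h₂ h₃,
      wedge_tactA F R₁ R₂ R₃ h₁ h₂ h₃]
  · dsimp only
    rw [tact_add, tact_sub, coact_conj F R₁ R₂ R₃ h₁ h₂ h₃, coact_conj F R₁ R₂ R₃ h₁ h₂ h₃,
      wedge_tact]
/-- `phiMap` as a linear map -/
def phiL (R₁ R₂ R₃ : gl3 F) : Mbig F →ₗ[F] Mbig F where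
  toFun := phiMap F R₁ R₂ R₃
  map_add' u v := by
    obtain ⟨⟨g₁, g₂, g₃⟩, x, f⟩ := u
    obtain ⟨⟨g₁', g₂', g₃'⟩, x', f'⟩ := v
    dsimp only [phiMap, Prod.mk_add_mk]
    refine Prod.ext (Prod.ext ?_ (Prod.ext ?_ ?_)) (Prod.ext ?_ ?_) <;> dsimp only <;>
      first
      | rw [tact_add]
      | rw [mul_add, add_mul]
  map_smul' c u := by
    obtain ⟨⟨g₁, g₂, g₃⟩, x, f⟩ := u
    dsimp only [phiMap, Prod.smul_mk, RingHom.id_apply]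
    refine Prod.ext (Prod.ext ?_ (Prod.ext ?_ ?_)) (Prod.ext ?_ ?_) <;> dsimp only <;>
      first
      | rw [tact_smul]
      | rw [Matrix.mul_smul, Matrix.smul_mul]

lemma phips (R₁ R₂ R₃ : gl3 F) (h₁ : R₁.det = 1) (h₂ : R₂.det = 1) (h₃ : R₃.det = 1)
    (m : Mbig F) :
    phiMap F R₁ R₂ R₃ (phiMap F R₁.adjugate R₂.adjugate R₃.adjugate m) = m := by
  obtain ⟨⟨g₁, g₂, g₃⟩, x, f⟩ := m
  dsimp only [phiMap]
  refine Prod.ext (Prod.ext ?_ (Prod.ext ?_ ?_)) (Prod.ext ?_ ?_) <;> dsimp only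
  · rw [adjadj F R₁ h₁]
    simp only [← mul_assoc]
    rw [muladj F R₁ h₁, one_mul, mul_assoc g₁, muladj F R₁ h₁, mul_one]
  · rw [adjadj F R₂ h₂]
    simp only [← mul_assoc]
    rw [muladj F R₂ h₂, one_mul, mul_assoc g₂, muladj F R₂ h₂, mul_one]
  · rw [adjadj F R₃ h₃]
    simp only [← mul_assoc]
    rw [muladj F R₃ h₃, one_mul, mul_assoc g₃, muladj F R₃ h₃, mul_one]
  · rw [tact_comp, muladj F R₁ h₁, muladj F R₂ h₂, muladj F R₃ h₃, tact_one]
  · rw [adjadj F R₁ h₁, adjadj F R₂ h₂, adjadj F R₃ h₃, tact_comp,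
      ← Matrix.transpose_mul, ← Matrix.transpose_mul, ← Matrix.transpose_mul,
      muladj F R₁ h₁, muladj F R₂ h₂, muladj F R₃ h₃, Matrix.transpose_one, tact_one]

lemma psiph (R₁ R₂ R₃ : gl3 F) (h₁ : R₁.det = 1) (h₂ : R₂.det = 1) (h₃ : R₃.det = 1)
    (m : Mbig F) :
    phiMap F R₁.adjugate R₂.adjugate R₃.adjugate (phiMap F R₁ R₂ R₃ m) = m := by
  obtain ⟨⟨g₁, g₂, g₃⟩, x, f⟩ := m
  dsimp only [phiMap]
  refine Prod.ext (Prod.ext ?_ (Prod.ext ?_ ?_)) (Prod.ext ?_ ?_) <;> dsimp only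
  · rw [adjadj F R₁ h₁]
    simp only [← mul_assoc]
    rw [adjmul F R₁ h₁, one_mul, mul_assoc g₁, adjmul F R₁ h₁, mul_one]
  · rw [adjadj F R₂ h₂]
    simp only [← mul_assoc]
    rw [adjmul F R₂ h₂, one_mul, mul_assoc g₂, adjmul F R₂ h₂, mul_one]
  · rw [adjadj F R₃ h₃]
    simp only [← mul_assoc]
    rw [adjmul F R₃ h₃, one_mul, mul_assoc g₃, adjmul F R₃ h₃, mul_one]
  · rw [tact_comp, adjmul F R₁ h₁, adjmul F R₂ h₂, adjmul F R₃ h₃, tact_one]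
  · rw [adjadj F R₁ h₁, adjadj F R₂ h₂, adjadj F R₃ h₃, tact_comp,
      ← Matrix.transpose_mul, ← Matrix.transpose_mul, ← Matrix.transpose_mul,
      adjmul F R₁ h₁, adjmul F R₂ h₂, adjmul F R₃ h₃, Matrix.transpose_one, tact_one]

lemma phi_mem (R₁ R₂ R₃ : gl3 F) (h₁ : R₁.det = 1) (h₂ : R₂.det = 1) (h₃ : R₃.det = 1) :
    ∀ m ∈ Lsub F, phiL F R₁ R₂ R₃ m ∈ Lsub F := by
  rintro ⟨⟨g₁, g₂, g₃⟩, x, f⟩ ⟨⟨t₁, t₂, t₃⟩, -, -⟩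
  refine ⟨⟨?_, ?_, ?_⟩, trivial, trivial⟩ <;>
    [ (show Matrix.trace (R₁ * g₁ * R₁.adjugate) = 0;
       rw [Matrix.trace_mul_comm, ← mul_assoc, adjmul F R₁ h₁, one_mul]; exact t₁);
      (show Matrix.trace (R₂ * g₂ * R₂.adjugate) = 0;
       rw [Matrix.trace_mul_comm, ← mul_assoc, adjmul F R₂ h₂, one_mul]; exact t₂);
      (show Matrix.trace (R₃ * g₃ * R₃.adjugate) = 0;
       rw [Matrix.trace_mul_comm, ← mul_assoc, adjmul F R₃ h₃, one_mul]; exact t₃)]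

/-- the automorphism `Φ` of `L`, as a linear equivalence -/
def phiE (R₁ R₂ R₃ : gl3 F) (h₁ : R₁.det = 1) (h₂ : R₂.det = 1) (h₃ : R₃.det = 1) :
    ↥(Lsub F) ≃ₗ[F] ↥(Lsub F) :=
  LinearEquiv.ofLinear
    ((phiL F R₁ R₂ R₃).restrict (phi_mem F R₁ R₂ R₃ h₁ h₂ h₃))
    ((phiL F R₁.adjugate R₂.adjugate R₃.adjugate).restrict
      (phi_mem F R₁.adjugate R₂.adjugate R₃.adjugate
        (det_adj_one F R₁ h₁) (det_adj_one F R₂ h₂) (det_adj_one F R₃ h₃)))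
    (by
      apply LinearMap.ext
      intro u
      exact Subtype.ext (phips F R₁ R₂ R₃ h₁ h₂ h₃ u.1))
    (by
      apply LinearMap.ext
      intro u
      exact Subtype.ext (psiph F R₁ R₂ R₃ h₁ h₂ h₃ u.1))

lemma phiE_coe (R₁ R₂ R₃ : gl3 F) (h₁ : R₁.det = 1) (h₂ : R₂.det = 1) (h₃ : R₃.det = 1)
    (u : ↥(Lsub F)) :
    (phiE F R₁ R₂ R₃ h₁ h₂ h₃ u : Mbig F) = phiMap F R₁ R₂ R₃ u.1 := rfl
/-- pure tensor -/
def PT (u v w : Fin 3 → F) : T3 F := fun i j k => u i * v j * w k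
/-- cross product (coordinates of `u ∧ v`) -/
def cr (u v : Fin 3 → F) : Fin 3 → F := fun c => u (c+1) * v (c+2) - u (c+2) * v (c+1)

lemma wedge_PT (u v w u' v' w' : Fin 3 → F) :
    wedgeT F (PT F u v w) (PT F u' v' w') = PT F (cr F u u') (cr F v v') (cr F w w') := by
  funext c d e
  rw [wedgeT_closed]
  simp only [PT, cr]
  ring

def sing (p : Fin 3) : Fin 3 → F := fun i => if i = p then 1 else 0

lemma cr_single (p : Fin 3) : cr F (sing F (p+1)) (sing F (p+2)) = sing F p := by
  funext c
  fin_cases p <;> fin_cases c <;>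
    simp [cr, sing, f3a01, f3a02, f3a11, f3a12, f3a21, f3a22]

/-- basis tensors -/
def Eb (p q r : Fin 3) : T3 F := PT F (sing F p) (sing F q) (sing F r)

lemma wedge_basis (p q r : Fin 3) :
    wedgeT F (Eb F (p+1) (q+1) (r+1)) (Eb F (p+2) (q+2) (r+2)) = Eb F p q r := by
  rw [Eb, Eb, wedge_PT, cr_single, cr_single, cr_single]
  rfl

lemma decomp (f : T3 F) : f = ∑ p, ∑ q, ∑ r, f p q r • Eb F p q r := by
  funext i j k
  fin_cases i <;> fin_cases j <;> fin_cases k <;>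
    simp [Eb, PT, sing, Fin.sum_univ_three, Finset.sum_apply, Pi.smul_apply]

/-- inclusion of `L₁` -/
def iXL : T3 F →ₗ[F] ↥(Lsub F) where
  toFun x := ⟨(((0,0,0) : gl3 F × gl3 F × gl3 F), (x, 0)), incT1_mem F x⟩
  map_add' x y := by
    apply Subtype.ext
    simp [Prod.ext_iff]
  map_smul' c x := by
    apply Subtype.ext
    simp [Prod.ext_iff]

/-- inclusion of `L₂` -/
def iFL : T3 F →ₗ[F] ↥(Lsub F) where
  toFun f := ⟨(((0,0,0) : gl3 F × gl3 F × gl3 F), (0, f)), incT2_mem F f⟩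
  map_add' x y := by
    apply Subtype.ext
    simp [Prod.ext_iff]
  map_smul' c x := by
    apply Subtype.ext
    simp [Prod.ext_iff]

lemma pair1_zero (y : T3 F) : pair1 F 0 y = 0 := by
  ext r s
  simp [pair1, tpair]
lemma pair2_zero (y : T3 F) : pair2 F 0 y = 0 := by
  ext r s
  simp [pair2, tpair]
lemma pair3_zero (y : T3 F) : pair3 F 0 y = 0 := by
  ext r s
  simp [pair3, tpair]
lemma actT_zero (x : T3 F) : actT F (0, 0, 0) x = 0 := by
  funext i j k
  simp [actT]
lemma coactT_zero (f : T3 F) : coactT F (0, 0, 0) f = 0 := by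
  funext i j k
  simp [coactT]
lemma wedgeT_zero : wedgeT F (0 : T3 F) 0 = 0 := by
  funext c d e
  simp [wedgeT]

lemma Bsub_XX (x y : T3 F) : Bsub F (iXL F x) (iXL F y) = iFL F (wedgeT F x y) := by
  apply Subtype.ext
  show B F (((0,0,0) : gl3 F × gl3 F × gl3 F), (x, 0))
      (((0,0,0) : gl3 F × gl3 F × gl3 F), (y, 0))
    = (((0,0,0) : gl3 F × gl3 F × gl3 F), ((0 : T3 F), wedgeT F x y))
  dsimp only [B]
  refine Prod.ext (Prod.ext ?_ (Prod.ext ?_ ?_)) (Prod.ext ?_ ?_) <;> dsimp only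
  · rw [pair1_zero, pair1_zero]; simp
  · rw [pair2_zero, pair2_zero]; simp
  · rw [pair3_zero, pair3_zero]; simp
  · rw [actT_zero, actT_zero, wedgeT_zero]; simp
  · rw [coactT_zero]; simp
def tactL (R₁ R₂ R₃ : gl3 F) : T3 F →ₗ[F] T3 F where
  toFun := tact F R₁ R₂ R₃
  map_add' := tact_add F R₁ R₂ R₃
  map_smul' := tact_smul F R₁ R₂ R₃

lemma tactL_apply (R₁ R₂ R₃ : gl3 F) (x : T3 F) :
    tactL F R₁ R₂ R₃ x = tact F R₁ R₂ R₃ x := rfl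

lemma phiE_extends (R₁ R₂ R₃ : gl3 F) (h₁ : R₁.det = 1) (h₂ : R₂.det = 1) (h₃ : R₃.det = 1) :
    ExtendsRho F R₁ R₂ R₃ (phiE F R₁ R₂ R₃ h₁ h₂ h₃) := by
  refine ⟨?_, ?_, ?_, ?_, ?_⟩
  · intro u v
    exact Subtype.ext (main_comm F R₁ R₂ R₃ h₁ h₂ h₃ u.1 v.1)
  · intro x
    rw [phiE_coe]
    refine Prod.ext (Prod.ext ?_ (Prod.ext ?_ ?_)) (Prod.ext ?_ ?_) <;>
      simp [phiMap, tact_zero]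
  · intro g h
    rw [phiE_coe, inv_eq_adj F R₁ h₁]
    refine Prod.ext (Prod.ext ?_ (Prod.ext ?_ ?_)) (Prod.ext ?_ ?_) <;>
      simp [phiMap, tact_zero]
  · intro g h
    rw [phiE_coe, inv_eq_adj F R₂ h₂]
    refine Prod.ext (Prod.ext ?_ (Prod.ext ?_ ?_)) (Prod.ext ?_ ?_) <;>
      simp [phiMap, tact_zero]
  · intro g h
    rw [phiE_coe, inv_eq_adj F R₃ h₃]
    refine Prod.ext (Prod.ext ?_ (Prod.ext ?_ ?_)) (Prod.ext ?_ ?_) <;>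
      simp [phiMap, tact_zero]

lemma L2_formula (R₁ R₂ R₃ : gl3 F) (Φ : ↥(Lsub F) ≃ₗ[F] ↥(Lsub F))
    (hΦ : ExtendsRho F R₁ R₂ R₃ Φ) (f : T3 F) :
    Φ (iFL F f) = iFL F (tact F (R₁.adjugate)ᵀ (R₂.adjugate)ᵀ (R₃.adjugate)ᵀ f) := by
  have hX : ∀ x : T3 F, Φ (iXL F x) = iXL F (tact F R₁ R₂ R₃ x) := by
    intro x
    exact Subtype.ext ((hΦ.2.1 x).trans rfl)
  have hE : ∀ p q r : Fin 3, Φ (iFL F (Eb F p q r))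
      = iFL F (tact F (R₁.adjugate)ᵀ (R₂.adjugate)ᵀ (R₃.adjugate)ᵀ (Eb F p q r)) := by
    intro p q r
    have h0 : iFL F (Eb F p q r)
        = Bsub F (iXL F (Eb F (p+1) (q+1) (r+1))) (iXL F (Eb F (p+2) (q+2) (r+2))) := by
      rw [Bsub_XX, wedge_basis]
    rw [h0, hΦ.1, hX, hX, Bsub_XX, wedge_tact, wedge_basis]
  have hcomp : Φ.toLinearMap ∘ₗ iFL F
      = iFL F ∘ₗ tactL F (R₁.adjugate)ᵀ (R₂.adjugate)ᵀ (R₃.adjugate)ᵀ := by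
    apply LinearMap.ext
    intro g
    conv_lhs => rw [decomp F g]
    conv_rhs => rw [decomp F g]
    simp only [map_sum, _root_.map_smul]
    simp only [LinearMap.comp_apply, LinearEquiv.coe_coe, tactL_apply, hE]
  exact LinearMap.congr_fun hcomp f

lemma extends_unique (R₁ R₂ R₃ : gl3 F) (Φ Φ' : ↥(Lsub F) ≃ₗ[F] ↥(Lsub F))
    (hΦ : ExtendsRho F R₁ R₂ R₃ Φ) (hΦ' : ExtendsRho F R₁ R₂ R₃ Φ') : Φ = Φ' := by
  apply LinearEquiv.ext
  rintro ⟨⟨⟨g₁, g₂, g₃⟩, x, f⟩, hu⟩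
  have t₁ : Matrix.trace g₁ = 0 := hu.1.1
  have t₂ : Matrix.trace g₂ = 0 := hu.1.2.1
  have t₃ : Matrix.trace g₃ = 0 := hu.1.2.2
  have hdec : (⟨((g₁, g₂, g₃), (x, f)), hu⟩ : ↥(Lsub F))
      = ⟨(((g₁, 0, 0) : gl3 F × gl3 F × gl3 F), (0, 0)),
          incSl_mem F g₁ 0 0 t₁ (by simp) (by simp)⟩
      + ⟨(((0, g₂, 0) : gl3 F × gl3 F × gl3 F), (0, 0)),
          incSl_mem F 0 g₂ 0 (by simp) t₂ (by simp)⟩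
      + ⟨(((0, 0, g₃) : gl3 F × gl3 F × gl3 F), (0, 0)),
          incSl_mem F 0 0 g₃ (by simp) (by simp) t₃⟩
      + iXL F x + iFL F f := by
    apply Subtype.ext
    simp [iXL, iFL, Prod.ext_iff]
  rw [hdec]
  simp only [map_add]
  have e₁ := Subtype.ext ((hΦ.2.2.1 g₁ t₁).trans (hΦ'.2.2.1 g₁ t₁).symm)
  have e₂ := Subtype.ext ((hΦ.2.2.2.1 g₂ t₂).trans (hΦ'.2.2.2.1 g₂ t₂).symm)
  have e₃ := Subtype.ext ((hΦ.2.2.2.2 g₃ t₃).trans (hΦ'.2.2.2.2 g₃ t₃).symm)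
  have eX : Φ (iXL F x) = Φ' (iXL F x) :=
    Subtype.ext ((hΦ.2.1 x).trans (hΦ'.2.1 x).symm)
  have eF : Φ (iFL F f) = Φ' (iFL F f) := by
    rw [L2_formula F R₁ R₂ R₃ Φ hΦ f, L2_formula F R₁ R₂ R₃ Φ' hΦ' f]
  rw [e₁, e₂, e₃, eX, eF]
/-- linear maps `ρ_i` preserving the trilinear forms are invertible, and there
is a unique Lie algebra automorphism `Φ` of `L` extending `ρ₁⊗ρ₂⊗ρ₃` on `L₁` and acting by
conjugation on each `sl(X_i)`; moreover `Φ = (ρ₁⁻¹)*⊗(ρ₂⁻¹)*⊗(ρ₃⁻¹)*` on `L₂`. -/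
theorem det_preserving_maps_extend_to_unique_automorphism
    (R₁ R₂ R₃ : gl3 F)
    (h1 : ∀ x y z : Fin 3 → F,
      det3 F (R₁.mulVec x) (R₁.mulVec y) (R₁.mulVec z) = det3 F x y z)
    (h2 : ∀ x y z : Fin 3 → F,
      det3 F (R₂.mulVec x) (R₂.mulVec y) (R₂.mulVec z) = det3 F x y z)
    (h3 : ∀ x y z : Fin 3 → F,
      det3 F (R₃.mulVec x) (R₃.mulVec y) (R₃.mulVec z) = det3 F x y z) :
    (IsUnit R₁ ∧ IsUnit R₂ ∧ IsUnit R₃) ∧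
    (∃! Φ : ↥(Lsub F) ≃ₗ[F] ↥(Lsub F), ExtendsRho F R₁ R₂ R₃ Φ) ∧
    (∀ Φ : ↥(Lsub F) ≃ₗ[F] ↥(Lsub F), ExtendsRho F R₁ R₂ R₃ Φ →
      ∀ f : T3 F,
        (Φ ⟨(((0, 0, 0) : gl3 F × gl3 F × gl3 F), (0, f)), incT2_mem F f⟩ : Mbig F) =
          (((0, 0, 0) : gl3 F × gl3 F × gl3 F),
            (0, tact F (R₁⁻¹)ᵀ (R₂⁻¹)ᵀ (R₃⁻¹)ᵀ f))) := by
  have hd₁ := det_of_preserving F R₁ h1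
  have hd₂ := det_of_preserving F R₂ h2
  have hd₃ := det_of_preserving F R₃ h3
  refine ⟨⟨?_, ?_, ?_⟩, ?_, ?_⟩
  · exact (Matrix.isUnit_iff_isUnit_det R₁).2 (by rw [hd₁]; exact isUnit_one)
  · exact (Matrix.isUnit_iff_isUnit_det R₂).2 (by rw [hd₂]; exact isUnit_one)
  · exact (Matrix.isUnit_iff_isUnit_det R₃).2 (by rw [hd₃]; exact isUnit_one)
  · exact ⟨phiE F R₁ R₂ R₃ hd₁ hd₂ hd₃, phiE_extends F R₁ R₂ R₃ hd₁ hd₂ hd₃,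
      fun Φ' h' => extends_unique F R₁ R₂ R₃ Φ' (phiE F R₁ R₂ R₃ hd₁ hd₂ hd₃) h'
        (phiE_extends F R₁ R₂ R₃ hd₁ hd₂ hd₃)⟩
  · intro Φ hΦ f
    rw [inv_eq_adj F R₁ hd₁, inv_eq_adj F R₂ hd₂, inv_eq_adj F R₃ hd₃]
    exact congrArg Subtype.val (L2_formula F R₁ R₂ R₃ Φ hΦ f)

end
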